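/- arXiv:1810.09848 — 3 statements merged into one kernel-verified Lean document; each statement's English description precedes it below -/
import Mathlib

section
/- Let (L, α_L) be a Hom-preLie algebra over a field 𝕂 and let (M, α_M) be a Hom-co-representation of (L, α_L). Define the linear maps d_1 : M ⊗ L → M by d_1(m ⊗ x_1) = m·x_1 − x_1·m, and d_2 : M ⊗ L ⊗ L → M ⊗ L by d_2(m ⊗ x_1 ⊗ x_2) = m·x_1 ⊗ α_L(x_2) + x_2·m ⊗ α_L(x_1) − α_M(m) ⊗ x_1x_2. Then d_1 ∘ d_2 = 0. -/
universe u v v₁ v₂ v₃ v₄ w₁ w₂ w₃ w₄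

/-- A Hom-preLie algebra over a field `𝕂`: a vector space with a bilinear
multiplication `mul` and a linear map `a` satisfying
`(α x)(y z) - (x y)(α z) = (α y)(x z) - (y x)(α z)`. -/
structure HomPreLie (𝕂 : Type u) [Field 𝕂] (L : Type v) [AddCommGroup L] [Module 𝕂 L] where
  mul : L →ₗ[𝕂] L →ₗ[𝕂] L
  a : L →ₗ[𝕂] L
  identity : ∀ x y z : L,
    mul (a x) (mul y z) - mul (mul x y) (a z) = mul (a y) (mul x z) - mul (mul y x) (a z)

namespace HomPreLie

variable {𝕂 : Type u} [Field 𝕂]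

/-- A homomorphism of Hom-preLie algebras. -/
def IsHom {L : Type v₁} [AddCommGroup L] [Module 𝕂 L]
    {L' : Type v₂} [AddCommGroup L'] [Module 𝕂 L']
    (A : HomPreLie 𝕂 L) (B : HomPreLie 𝕂 L') (f : L →ₗ[𝕂] L') : Prop :=
  (∀ x y : L, f (A.mul x y) = B.mul (f x) (f y)) ∧ ∀ x : L, f (A.a x) = B.a (f x)

/-- Perfect: `L = LL`. -/
def Perfect {L : Type v₁} [AddCommGroup L] [Module 𝕂 L] (A : HomPreLie 𝕂 L) : Prop :=
  Submodule.span 𝕂 {z : L | ∃ x y : L, z = A.mul x y} = ⊤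

/-- α-perfect: `L = α(L)α(L)`. -/
def AlphaPerfect {L : Type v₁} [AddCommGroup L] [Module 𝕂 L] (A : HomPreLie 𝕂 L) : Prop :=
  Submodule.span 𝕂 {z : L | ∃ x y : L, z = A.mul (A.a x) (A.a y)} = ⊤

/-- The annihilator `Z(L)`. -/
def ann {L : Type v₁} [AddCommGroup L] [Module 𝕂 L] (A : HomPreLie 𝕂 L) : Set L :=
  {x : L | ∀ y : L, A.mul x y = 0 ∧ A.mul y x = 0}

/-- A short exact sequence of Hom-preLie algebras `0 → M → K → L → 0`. -/
structure IsSES {M : Type v₁} [AddCommGroup M] [Module 𝕂 M]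
    {K : Type v₂} [AddCommGroup K] [Module 𝕂 K]
    {L : Type v₃} [AddCommGroup L] [Module 𝕂 L]
    (AM : HomPreLie 𝕂 M) (AK : HomPreLie 𝕂 K) (AL : HomPreLie 𝕂 L)
    (i : M →ₗ[𝕂] K) (π : K →ₗ[𝕂] L) : Prop where
  hom_i : AM.IsHom AK i
  hom_proj : AK.IsHom AL π
  inj : Function.Injective i
  surj : Function.Surjective π
  ran_eq_ker : LinearMap.range i = LinearMap.ker π

/-- A central extension: a short exact sequence with `MK = 0 = KM`. -/
def IsCentralExt {M : Type v₁} [AddCommGroup M] [Module 𝕂 M]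
    {K : Type v₂} [AddCommGroup K] [Module 𝕂 K]
    {L : Type v₃} [AddCommGroup L] [Module 𝕂 L]
    (AM : HomPreLie 𝕂 M) (AK : HomPreLie 𝕂 K) (AL : HomPreLie 𝕂 L)
    (i : M →ₗ[𝕂] K) (π : K →ₗ[𝕂] L) : Prop :=
  IsSES AM AK AL i π ∧ ∀ (m : M) (k : K), AK.mul (i m) k = 0 ∧ AK.mul k (i m) = 0

/-- An α-central extension: a short exact sequence with `α_M(M)K = 0 = Kα_M(M)`. -/
def IsAlphaCentralExt {M : Type v₁} [AddCommGroup M] [Module 𝕂 M]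
    {K : Type v₂} [AddCommGroup K] [Module 𝕂 K]
    {L : Type v₃} [AddCommGroup L] [Module 𝕂 L]
    (AM : HomPreLie 𝕂 M) (AK : HomPreLie 𝕂 K) (AL : HomPreLie 𝕂 L)
    (i : M →ₗ[𝕂] K) (π : K →ₗ[𝕂] L) : Prop :=
  IsSES AM AK AL i π ∧
    ∀ (m : M) (k : K), AK.mul (i (AM.a m)) k = 0 ∧ AK.mul k (i (AM.a m)) = 0

/-- A universal central extension. -/
def IsUniversalCentralExt {M : Type v₁} [AddCommGroup M] [Module 𝕂 M]
    {K : Type v₂} [AddCommGroup K] [Module 𝕂 K]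
    {L : Type v₃} [AddCommGroup L] [Module 𝕂 L]
    (AM : HomPreLie 𝕂 M) (AK : HomPreLie 𝕂 K) (AL : HomPreLie 𝕂 L)
    (i : M →ₗ[𝕂] K) (π : K →ₗ[𝕂] L) : Prop :=
  IsCentralExt AM AK AL i π ∧
    ∀ (M' : Type w₁) (K' : Type w₂) [AddCommGroup M'] [Module 𝕂 M']
      [AddCommGroup K'] [Module 𝕂 K']
      (AM' : HomPreLie 𝕂 M') (AK' : HomPreLie 𝕂 K')
      (i' : M' →ₗ[𝕂] K') (π' : K' →ₗ[𝕂] L),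
      IsCentralExt AM' AK' AL i' π' →
        ∃! h : K →ₗ[𝕂] K', AK.IsHom AK' h ∧ π' ∘ₗ h = π

/-- A universal α-central extension: a central extension through which every
α-central extension factors uniquely. -/
def IsUniversalAlphaCentralExt {M : Type v₁} [AddCommGroup M] [Module 𝕂 M]
    {K : Type v₂} [AddCommGroup K] [Module 𝕂 K]
    {L : Type v₃} [AddCommGroup L] [Module 𝕂 L]
    (AM : HomPreLie 𝕂 M) (AK : HomPreLie 𝕂 K) (AL : HomPreLie 𝕂 L)
    (i : M →ₗ[𝕂] K) (π : K →ₗ[𝕂] L) : Prop :=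
  IsCentralExt AM AK AL i π ∧
    ∀ (M' : Type w₁) (K' : Type w₂) [AddCommGroup M'] [Module 𝕂 M']
      [AddCommGroup K'] [Module 𝕂 K']
      (AM' : HomPreLie 𝕂 M') (AK' : HomPreLie 𝕂 K')
      (i' : M' →ₗ[𝕂] K') (π' : K' →ₗ[𝕂] L),
      IsAlphaCentralExt AM' AK' AL i' π' →
        ∃! h : K →ₗ[𝕂] K', AK.IsHom AK' h ∧ π' ∘ₗ h = π

end HomPreLie

namespace HomPreLie

/-- A Hom-co-representation of a Hom-preLie algebra `(L, α_L)`: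
a vector space `M` with actions `lam : L ⊗ M → M`, `rho : M ⊗ L → M`
and a linear map `aM : M → M` satisfying the five compatibility axioms. -/
structure IsCoRep {𝕂 : Type u} [Field 𝕂] {L : Type v₁} [AddCommGroup L] [Module 𝕂 L]
    {M : Type v₂} [AddCommGroup M] [Module 𝕂 M] (A : HomPreLie 𝕂 L)
    (lam : L →ₗ[𝕂] M →ₗ[𝕂] M) (rho : M →ₗ[𝕂] L →ₗ[𝕂] M) (aM : M →ₗ[𝕂] M) : Prop where
  act1 : ∀ (x y : L) (m : M), rho (aM m) (A.mul x y) = rho (rho m x) (A.a y)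
  act2 : ∀ (x y : L) (m : M), lam (A.mul x y) (aM m) = lam (A.a x) (lam y m)
  act3 : ∀ (x y : L) (m : M), lam (A.a x) (rho m y) = rho (lam x m) (A.a y)
  act4 : ∀ (x : L) (m : M), aM (lam x m) = lam (A.a x) (aM m)
  act5 : ∀ (x : L) (m : M), aM (rho m x) = rho (aM m) (A.a x)

end HomPreLie

/-
The three terms of `d₂(m ⊗ x₁ ⊗ x₂)` are sent by `d₁` to six terms which cancel in pairs:
`(m·x₁)·α(x₂)` against `α(m)·(x₁x₂)` by the first axiom, `(x₁x₂)·α(m)` against `α(x₁)·(x₂·m)`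
by the second, and `α(x₂)·(m·x₁)` against `(x₂·m)·α(x₁)` by the third.
-/

open TensorProduct

namespace HomPreLie.IsCoRep

variable {𝕂 : Type u} [Field 𝕂] {L : Type v₁} [AddCommGroup L] [Module 𝕂 L]
  {M : Type v₂} [AddCommGroup M] [Module 𝕂 M] {A : HomPreLie 𝕂 L}
  {lam : L →ₗ[𝕂] M →ₗ[𝕂] M} {rho : M →ₗ[𝕂] L →ₗ[𝕂] M} {aM : M →ₗ[𝕂] M}

theorem rho_sub_lam_cocycle (hrep : IsCoRep A lam rho aM) (m : M) (x₁ x₂ : L) :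
    rho (rho m x₁) (A.a x₂) - lam (A.a x₂) (rho m x₁)
      + (rho (lam x₂ m) (A.a x₁) - lam (A.a x₁) (lam x₂ m))
      - (rho (aM m) (A.mul x₁ x₂) - lam (A.mul x₁ x₂) (aM m)) = 0 := by
  rw [hrep.act1, hrep.act2, hrep.act3]
  abel

end HomPreLie.IsCoRep

/-- For a Hom-co-representation `(M, α_M)` of a Hom-preLie algebra `(L, α_L)`,
with `d₁(m ⊗ x₁) = m·x₁ − x₁·m` and
`d₂(m ⊗ x₁ ⊗ x₂) = m·x₁ ⊗ α_L(x₂) + x₂·m ⊗ α_L(x₁) − α_M(m) ⊗ x₁x₂`,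
we have `d₁ ∘ d₂ = 0`. -/
theorem stmt0 {𝕂 : Type u} [Field 𝕂] {L : Type v₁} [AddCommGroup L] [Module 𝕂 L]
    {M : Type v₂} [AddCommGroup M] [Module 𝕂 M] (A : HomPreLie 𝕂 L)
    (lam : L →ₗ[𝕂] M →ₗ[𝕂] M) (rho : M →ₗ[𝕂] L →ₗ[𝕂] M) (aM : M →ₗ[𝕂] M)
    (hrep : HomPreLie.IsCoRep A lam rho aM)
    (d₁ : M ⊗[𝕂] L →ₗ[𝕂] M)
    (hd₁ : ∀ (m : M) (x₁ : L), d₁ (m ⊗ₜ x₁) = rho m x₁ - lam x₁ m)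
    (d₂ : (M ⊗[𝕂] L) ⊗[𝕂] L →ₗ[𝕂] M ⊗[𝕂] L)
    (hd₂ : ∀ (m : M) (x₁ x₂ : L),
      d₂ ((m ⊗ₜ x₁) ⊗ₜ x₂) =
        (rho m x₁) ⊗ₜ (A.a x₂) + (lam x₂ m) ⊗ₜ (A.a x₁) - (aM m) ⊗ₜ (A.mul x₁ x₂)) :
    d₁ ∘ₗ d₂ = 0 := by
  refine TensorProduct.ext_threefold fun m x₁ x₂ => ?_
  rw [LinearMap.comp_apply, hd₂, map_sub, map_add, hd₁, hd₁, hd₁, LinearMap.zero_apply]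
  exact hrep.rho_sub_lam_cocycle m x₁ x₂
end

section
/- The composition of two central extensions of Hom-preLie algebras need not be a central extension. Concretely, over any field 𝕂, let (L, 0) be the 2-dimensional Hom-preLie algebra with basis {b_1, b_2}, multiplication b_2b_1 = b_2, b_2b_2 = b_1 (all other products of basis elements zero) and zero structure map; let (K, 0) be the 3-dimensional Hom-preLie algebra with basis {a_1, a_2, a_3}, multiplication a_2a_2 = a_1, a_3a_2 = a_3, a_3a_3 = a_2 (all other products zero) and zero structure map; let (F, 0) be the 4-dimensional Hom-preLie algebra with basis {e_1, e_2, e_3, e_4}, multiplication e_2e_3 = e_1, e_3e_3 = e_2, e_4e_3 = e_4, e_4e_4 = e_3 (all other products zero) and zero structure map. The linear maps π : K → L with π(a_1) = 0, π(a_2) = b_1, π(a_3) = b_2, and ρ : F → K with ρ(e_1) = 0, ρ(e_2) = a_1, ρ(e_3) = a_2, ρ(e_4) = a_3, are surjective Hom-preLie homomorphisms with Ker(π) ⊆ Z(K) and Ker(ρ) ⊆ Z(F) (so each is a central extension), but the surjective homomorphism π ∘ ρ : F → L satisfies Ker(π ∘ ρ) ⊄ Z(F), so it is not a central extension. -/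
universe u v v₁ v₂ v₃ v₄ w₁ w₂ w₃ w₄

/-- The bilinear multiplication of the 2-dimensional algebra `L`:
`b₂b₁ = b₂`, `b₂b₂ = b₁` (with `b₁ = e₀`, `b₂ = e₁`), all other products of basis
elements zero. -/
def mulL (𝕂 : Type u) [Field 𝕂] :
    (Fin 2 → 𝕂) →ₗ[𝕂] (Fin 2 → 𝕂) →ₗ[𝕂] (Fin 2 → 𝕂) :=
  LinearMap.mk₂ 𝕂 (fun x y => ![x 1 * y 1, x 1 * y 0])
    (by intro x x' y; funext i; fin_cases i <;> simp <;> ring)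
    (by intro c x y; funext i; fin_cases i <;> simp <;> ring)
    (by intro x y y'; funext i; fin_cases i <;> simp <;> ring)
    (by intro c x y; funext i; fin_cases i <;> simp <;> ring)

/-- Multiplication of the 3-dimensional algebra `K`: `a₂a₂ = a₁`, `a₃a₂ = a₃`,
`a₃a₃ = a₂` (with `a₁ = e₀`, `a₂ = e₁`, `a₃ = e₂`), all other products zero. -/
def mulK (𝕂 : Type u) [Field 𝕂] :
    (Fin 3 → 𝕂) →ₗ[𝕂] (Fin 3 → 𝕂) →ₗ[𝕂] (Fin 3 → 𝕂) :=
  LinearMap.mk₂ 𝕂 (fun x y => ![x 1 * y 1, x 2 * y 2, x 2 * y 1])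
    (by intro x x' y; funext i; fin_cases i <;> simp <;> ring)
    (by intro c x y; funext i; fin_cases i <;> simp <;> ring)
    (by intro x y y'; funext i; fin_cases i <;> simp <;> ring)
    (by intro c x y; funext i; fin_cases i <;> simp <;> ring)

/-- Multiplication of the 4-dimensional algebra `F`: `e₂e₃ = e₁`, `e₃e₃ = e₂`,
`e₄e₃ = e₄`, `e₄e₄ = e₃` (with `eᵢ` the `(i-1)`-st standard basis vector), all other
products zero. -/
def mulF (𝕂 : Type u) [Field 𝕂] :
    (Fin 4 → 𝕂) →ₗ[𝕂] (Fin 4 → 𝕂) →ₗ[𝕂] (Fin 4 → 𝕂) :=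
  LinearMap.mk₂ 𝕂 (fun x y => ![x 1 * y 2, x 2 * y 2, x 3 * y 3, x 3 * y 2])
    (by intro x x' y; funext i; fin_cases i <;> simp <;> ring)
    (by intro c x y; funext i; fin_cases i <;> simp <;> ring)
    (by intro x y y'; funext i; fin_cases i <;> simp <;> ring)
    (by intro c x y; funext i; fin_cases i <;> simp <;> ring)

/-- The Hom-preLie algebra `(L, 0)`. -/
def exL (𝕂 : Type u) [Field 𝕂] : HomPreLie 𝕂 (Fin 2 → 𝕂) :=
  ⟨mulL 𝕂, 0, by intros; simp⟩

/-- The Hom-preLie algebra `(K, 0)`. -/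
def exK (𝕂 : Type u) [Field 𝕂] : HomPreLie 𝕂 (Fin 3 → 𝕂) :=
  ⟨mulK 𝕂, 0, by intros; simp⟩

/-- The Hom-preLie algebra `(F, 0)`. -/
def exF (𝕂 : Type u) [Field 𝕂] : HomPreLie 𝕂 (Fin 4 → 𝕂) :=
  ⟨mulF 𝕂, 0, by intros; simp⟩

/-- The linear map `π : K → L`, `π(a₁) = 0`, `π(a₂) = b₁`, `π(a₃) = b₂`. -/
def piMap (𝕂 : Type u) [Field 𝕂] : (Fin 3 → 𝕂) →ₗ[𝕂] (Fin 2 → 𝕂) where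
  toFun x := ![x 1, x 2]
  map_add' x y := by funext i; fin_cases i <;> simp
  map_smul' c x := by funext i; fin_cases i <;> simp

/-- The linear map `ρ : F → K`, `ρ(e₁) = 0`, `ρ(e₂) = a₁`, `ρ(e₃) = a₂`,
`ρ(e₄) = a₃`. -/
def rhoMap (𝕂 : Type u) [Field 𝕂] : (Fin 4 → 𝕂) →ₗ[𝕂] (Fin 3 → 𝕂) where
  toFun x := ![x 1, x 2, x 3]
  map_add' x y := by funext i; fin_cases i <;> simp
  map_smul' c x := by funext i; fin_cases i <;> simp

namespace HomPreLie

variable {𝕂 : Type u} [Field 𝕂]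
  {L₁ : Type v₁} [AddCommGroup L₁] [Module 𝕂 L₁]
  {L₂ : Type v₂} [AddCommGroup L₂] [Module 𝕂 L₂]
  {L₃ : Type v₃} [AddCommGroup L₃] [Module 𝕂 L₃]

theorem IsHom.comp {A : HomPreLie 𝕂 L₁} {B : HomPreLie 𝕂 L₂} {C : HomPreLie 𝕂 L₃}
    {f : L₁ →ₗ[𝕂] L₂} {g : L₂ →ₗ[𝕂] L₃} (hg : B.IsHom C g) (hf : A.IsHom B f) :
    A.IsHom C (g ∘ₗ f) :=
  ⟨fun x y => by simp only [LinearMap.comp_apply, hf.1, hg.1],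
    fun x => by simp only [LinearMap.comp_apply, hf.2, hg.2]⟩

end HomPreLie

section Example

variable (𝕂 : Type u) [Field 𝕂]

theorem piMap_isHom : (exK 𝕂).IsHom (exL 𝕂) (piMap 𝕂) := by
  refine ⟨fun x y => ?_, fun x => ?_⟩
  · funext i
    fin_cases i <;> simp [exK, exL, mulK, mulL, piMap]
  · simp [exK, exL]

theorem rhoMap_isHom : (exF 𝕂).IsHom (exK 𝕂) (rhoMap 𝕂) := by
  refine ⟨fun x y => ?_, fun x => ?_⟩
  · funext i
    fin_cases i <;> simp [exF, exK, mulF, mulK, rhoMap]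
  · simp [exF, exK]

theorem piMap_surjective : Function.Surjective (piMap 𝕂) := fun b =>
  ⟨![0, b 0, b 1], by funext i; fin_cases i <;> simp [piMap]⟩

theorem rhoMap_surjective : Function.Surjective (rhoMap 𝕂) := fun b =>
  ⟨![0, b 0, b 1, b 2], by funext i; fin_cases i <;> simp [rhoMap]⟩

theorem ker_piMap_subset_ann :
    (LinearMap.ker (piMap 𝕂) : Set (Fin 3 → 𝕂)) ⊆ (exK 𝕂).ann := by
  intro x hx y
  have h1 : x 1 = 0 := congrFun hx 0
  have h2 : x 2 = 0 := congrFun hx 1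
  constructor <;> funext i <;> fin_cases i <;> simp [exK, mulK, h1, h2]

theorem ker_rhoMap_subset_ann :
    (LinearMap.ker (rhoMap 𝕂) : Set (Fin 4 → 𝕂)) ⊆ (exF 𝕂).ann := by
  intro x hx y
  have h1 : x 1 = 0 := congrFun hx 0
  have h2 : x 2 = 0 := congrFun hx 1
  have h3 : x 3 = 0 := congrFun hx 2
  constructor <;> funext i <;> fin_cases i <;> simp [exF, mulF, h1, h2, h3]

-- `e₂` is killed by `π ∘ ρ`, yet `e₂e₃ = e₁ ≠ 0`.
theorem not_ker_piMap_comp_rhoMap_subset_ann :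
    ¬ ((LinearMap.ker (piMap 𝕂 ∘ₗ rhoMap 𝕂) : Set (Fin 4 → 𝕂)) ⊆ (exF 𝕂).ann) := by
  intro h
  have he₂ : (Pi.single 1 1 : Fin 4 → 𝕂) ∈ LinearMap.ker (piMap 𝕂 ∘ₗ rhoMap 𝕂) := by
    funext i
    fin_cases i <;> simp [piMap, rhoMap]
  have hprod := congrFun (h he₂ (Pi.single 2 1)).1 0
  simp [exF, mulF] at hprod

end Example

/-- `π` and `ρ` are central extensions of Hom-preLie algebras, but the composition
`π ∘ ρ : (F, 0) → (L, 0)` is a surjective homomorphism which is **not** a central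
extension. -/
theorem stmt3 (𝕂 : Type u) [Field 𝕂] :
    (exK 𝕂).IsHom (exL 𝕂) (piMap 𝕂) ∧ Function.Surjective (piMap 𝕂) ∧
      (LinearMap.ker (piMap 𝕂) : Set (Fin 3 → 𝕂)) ⊆ (exK 𝕂).ann ∧
    (exF 𝕂).IsHom (exK 𝕂) (rhoMap 𝕂) ∧ Function.Surjective (rhoMap 𝕂) ∧
      (LinearMap.ker (rhoMap 𝕂) : Set (Fin 4 → 𝕂)) ⊆ (exF 𝕂).ann ∧
    (exF 𝕂).IsHom (exL 𝕂) (piMap 𝕂 ∘ₗ rhoMap 𝕂) ∧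
      Function.Surjective (piMap 𝕂 ∘ₗ rhoMap 𝕂) ∧
    ¬ ((LinearMap.ker (piMap 𝕂 ∘ₗ rhoMap 𝕂) : Set (Fin 4 → 𝕂)) ⊆ (exF 𝕂).ann) :=
  ⟨piMap_isHom 𝕂, piMap_surjective 𝕂, ker_piMap_subset_ann 𝕂,
    rhoMap_isHom 𝕂, rhoMap_surjective 𝕂, ker_rhoMap_subset_ann 𝕂,
    (piMap_isHom 𝕂).comp (rhoMap_isHom 𝕂), (piMap_surjective 𝕂).comp (rhoMap_surjective 𝕂),
    not_ker_piMap_comp_rhoMap_subset_ann 𝕂⟩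
end

section
/- Let 0 → (M, α_M) →(i) (K, α_K) →(π) (L, α_L) → 0 be an α-central extension of Hom-preLie algebras with (K, α_K) a perfect Hom-preLie algebra, and let 0 → (N, α_N) →(j) (A, α_A) →(τ) (L, α_L) → 0 be a central extension. If f_1, f_2 : (K, α_K) → (A, α_A) are Hom-preLie homomorphisms with τ ∘ f_1 = π = τ ∘ f_2, then f_1 = f_2. -/
universe u v v₁ v₂ v₃ v₄ w₁ w₂ w₃ w₄

/-! Two lifts `f₁, f₂` of `π` differ by elements of `ker τ`, which is central in `A`; hence
`f₁ (x y) = f₁ x f₁ y = f₂ x f₂ y = f₂ (x y)`, and products span `K`. -/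

namespace HomPreLie

variable {𝕂 : Type u} [Field 𝕂]

theorem IsCentralExt.sub_mem_ann {N : Type w₁} [AddCommGroup N] [Module 𝕂 N]
    {A : Type w₂} [AddCommGroup A] [Module 𝕂 A] {L : Type v₃} [AddCommGroup L] [Module 𝕂 L]
    {AN : HomPreLie 𝕂 N} {AA : HomPreLie 𝕂 A} {AL : HomPreLie 𝕂 L}
    {j : N →ₗ[𝕂] A} {τ : A →ₗ[𝕂] L} (h : IsCentralExt AN AA AL j τ)
    {a b : A} (hab : τ a = τ b) : a - b ∈ AA.ann := by
  have hker : a - b ∈ LinearMap.ker τ := by simp [hab]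
  rw [← h.1.ran_eq_ker] at hker
  obtain ⟨n, hn⟩ := hker
  exact hn ▸ h.2 n

theorem mul_eq_mul_of_sub_mem_ann {A : Type w₂} [AddCommGroup A] [Module 𝕂 A]
    (AA : HomPreLie 𝕂 A) {x₁ x₂ y₁ y₂ : A}
    (hx : x₁ - x₂ ∈ AA.ann) (hy : y₁ - y₂ ∈ AA.ann) :
    AA.mul x₁ y₁ = AA.mul x₂ y₂ := by
  calc AA.mul x₁ y₁
      = AA.mul (x₁ - x₂) y₁ + AA.mul x₂ (y₁ - y₂) + AA.mul x₂ y₂ := by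
        simp only [map_sub, LinearMap.sub_apply]; abel
    _ = AA.mul x₂ y₂ := by rw [(hx y₁).1, (hy x₂).2, zero_add, zero_add]

theorem Perfect.linearMap_ext {K : Type v₂} [AddCommGroup K] [Module 𝕂 K]
    {A : Type w₂} [AddCommGroup A] [Module 𝕂 A] {AK : HomPreLie 𝕂 K} (hperf : AK.Perfect)
    {f g : K →ₗ[𝕂] A} (h : ∀ x y : K, f (AK.mul x y) = g (AK.mul x y)) : f = g :=
  LinearMap.ext_on hperf (by rintro _ ⟨x, y, rfl⟩; exact h x y)

end HomPreLie

theorem stmt5_general {𝕂 : Type u} [Field 𝕂]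
    {K : Type v₂} [AddCommGroup K] [Module 𝕂 K]
    {L : Type v₃} [AddCommGroup L] [Module 𝕂 L]
    {N : Type w₁} [AddCommGroup N] [Module 𝕂 N]
    {A : Type w₂} [AddCommGroup A] [Module 𝕂 A]
    (AK : HomPreLie 𝕂 K) (AL : HomPreLie 𝕂 L)
    (AN : HomPreLie 𝕂 N) (AA : HomPreLie 𝕂 A)
    (π : K →ₗ[𝕂] L) (j : N →ₗ[𝕂] A) (τ : A →ₗ[𝕂] L)
    (hperf : AK.Perfect)
    (hcentral : HomPreLie.IsCentralExt AN AA AL j τ)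
    (f₁ f₂ : K →ₗ[𝕂] A)
    (hf₁ : AK.IsHom AA f₁) (hf₂ : AK.IsHom AA f₂)
    (hcomm₁ : τ ∘ₗ f₁ = π) (hcomm₂ : τ ∘ₗ f₂ = π) :
    f₁ = f₂ := by
  have hlift : ∀ x, f₁ x - f₂ x ∈ AA.ann := fun x =>
    hcentral.sub_mem_ann (by rw [← LinearMap.comp_apply, hcomm₁, ← hcomm₂]; rfl)
  refine hperf.linearMap_ext fun x y => ?_
  rw [hf₁.1, hf₂.1]
  exact AA.mul_eq_mul_of_sub_mem_ann (hlift x) (hlift y)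

/-- Given an α-central extension `0 → (M,α_M) → (K,α_K) →π (L,α_L) → 0` with `K` perfect
and a central extension `0 → (N,α_N) → (A,α_A) →τ (L,α_L) → 0`, any two Hom-preLie
homomorphisms `f₁ f₂ : K → A` with `τ ∘ f₁ = π = τ ∘ f₂` coincide. -/
theorem stmt5 {𝕂 : Type u} [Field 𝕂]
    {M : Type v₁} [AddCommGroup M] [Module 𝕂 M]
    {K : Type v₂} [AddCommGroup K] [Module 𝕂 K]
    {L : Type v₃} [AddCommGroup L] [Module 𝕂 L]
    {N : Type w₁} [AddCommGroup N] [Module 𝕂 N]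
    {A : Type w₂} [AddCommGroup A] [Module 𝕂 A]
    (AM : HomPreLie 𝕂 M) (AK : HomPreLie 𝕂 K) (AL : HomPreLie 𝕂 L)
    (AN : HomPreLie 𝕂 N) (AA : HomPreLie 𝕂 A)
    (i : M →ₗ[𝕂] K) (π : K →ₗ[𝕂] L) (j : N →ₗ[𝕂] A) (τ : A →ₗ[𝕂] L)
    (hαcentral : HomPreLie.IsAlphaCentralExt AM AK AL i π)
    (hperf : AK.Perfect)
    (hcentral : HomPreLie.IsCentralExt AN AA AL j τ)
    (f₁ f₂ : K →ₗ[𝕂] A)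
    (hf₁ : AK.IsHom AA f₁) (hf₂ : AK.IsHom AA f₂)
    (hcomm₁ : τ ∘ₗ f₁ = π) (hcomm₂ : τ ∘ₗ f₂ = π) :
    f₁ = f₂ :=
  stmt5_general AK AL AN AA π j τ hperf hcentral f₁ f₂ hf₁ hf₂ hcomm₁ hcomm₂
end
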